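/- Let K be a finite multigraph and H a finite simple graph such that K has an H-partition of width w. Let X be the set of all vertices of K that are not in solitary bags. Then rcr(K) ≤ rcr(H) · w² · Δ(K)² + (w − 1) · Σ_{v ∈ X} deg_K(v)². -/

import Mathlib

/-! ## Basic geometric notions -/

/-- The closed straight-line segment determined by an unordered pair of points of the plane. -/
def segOf : Sym2 (ℝ × ℝ) → Set (ℝ × ℝ) :=
  Sym2.lift ⟨fun a b => segment ℝ a b, fun a b => segment_symm ℝ a b⟩

/-- A set `S` of points of the plane is in *general position* if no three of its points are
collinear and no three distinct segments between pairs of its points have a common point,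
unless all three segments share a common endpoint. -/
def GenPos (S : Set (ℝ × ℝ)) : Prop :=
  (∀ a ∈ S, ∀ b ∈ S, ∀ c ∈ S, a ≠ b → a ≠ c → b ≠ c →
      ¬ Collinear ℝ ({a, b, c} : Set (ℝ × ℝ))) ∧
  (∀ s₁ s₂ s₃ : Sym2 (ℝ × ℝ),
      (∀ x ∈ s₁, x ∈ S) → (∀ x ∈ s₂, x ∈ S) → (∀ x ∈ s₃, x ∈ S) →
      s₁ ≠ s₂ → s₁ ≠ s₃ → s₂ ≠ s₃ →
      ∀ q, q ∈ segOf s₁ → q ∈ segOf s₂ → q ∈ segOf s₃ →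
        ∃ z, z ∈ s₁ ∧ z ∈ s₂ ∧ z ∈ s₃)

/-! ## Multigraphs and their rectilinear drawings -/

/-- A multigraph: parallel edges allowed, no loops.  `E` indexes the edges. -/
structure Multigraph (V E : Type) where
  ends : E → Sym2 V
  not_isDiag : ∀ e, ¬ (ends e).IsDiag

namespace Multigraph

variable {V E : Type}

/-- A rectilinear drawing of a multigraph: an injective placement of the vertices at points
of the plane in general position; each edge is represented by the closed segment between
the points of its endpoints. -/
def IsRectDrawing (_K : Multigraph V E) (p : V → ℝ × ℝ) : Prop :=
  Function.Injective p ∧ GenPos (Set.range p)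

/-- Two edges form a *crossing pair* in a drawing if they have no common endpoint and their
segments have a common point. -/
def CrossingPair (K : Multigraph V E) (p : V → ℝ × ℝ) (e f : E) : Prop :=
  (∀ v : V, ¬ (v ∈ K.ends e ∧ v ∈ K.ends f)) ∧
  (segOf ((K.ends e).map p) ∩ segOf ((K.ends f).map p)).Nonempty

/-- The number of crossings of a rectilinear drawing: the number of unordered crossing
pairs of edges. -/
noncomputable def crossCount (K : Multigraph V E) (p : V → ℝ × ℝ) : ℕ :=
  Nat.card {s : Sym2 E // ∃ e f : E, s = s(e, f) ∧ K.CrossingPair p e f}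

/-- The rectilinear crossing number of a multigraph. -/
noncomputable def rcr (K : Multigraph V E) : ℕ :=
  sInf {n | ∃ p : V → ℝ × ℝ, K.IsRectDrawing p ∧ K.crossCount p = n}

/-- The degree of a vertex: the number of edges incident to it. -/
noncomputable def deg (K : Multigraph V E) (v : V) : ℕ := Nat.card {e : E // v ∈ K.ends e}

/-- The maximum degree `Δ`. -/
noncomputable def maxDeg (K : Multigraph V E) : ℕ := sSup (Set.range K.deg)

/-- The number of edges (counted with multiplicity). -/
noncomputable def edgeCount (_K : Multigraph V E) : ℕ := Nat.card E

/-- The underlying simple graph of a multigraph. -/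
def toSimple (K : Multigraph V E) : SimpleGraph V where
  Adj u v := u ≠ v ∧ ∃ e, K.ends e = s(u, v)
  symm := by
    constructor
    rintro u v ⟨huv, e, he⟩
    exact ⟨huv.symm, e, he.trans (Sym2.eq_swap)⟩
  loopless := by
    constructor
    intro v h
    exact h.1 rfl

end Multigraph

/-! ## Simple graphs: rectilinear drawings, degree, edges -/

/-- The multigraph associated with a simple graph (edges indexed by the edge set). -/
def SimpleGraph.toMulti {V : Type} (G : SimpleGraph V) : Multigraph V G.edgeSet where
  ends := Subtype.val
  not_isDiag := fun e => G.not_isDiag_of_mem_edgeSet e.2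

/-- The rectilinear crossing number of a simple graph. -/
noncomputable def SimpleGraph.rcr {V : Type} (G : SimpleGraph V) : ℕ := G.toMulti.rcr

/-- The maximum degree `Δ(G)` of a simple graph. -/
noncomputable def SimpleGraph.maxDeg {V : Type} (G : SimpleGraph V) : ℕ := G.toMulti.maxDeg

/-- The number `‖G‖` of edges of a simple graph. -/
noncomputable def SimpleGraph.edgeCount {V : Type} (G : SimpleGraph V) : ℕ :=
  Nat.card G.edgeSet

/-! ## Topological drawings, crossing number, planarity -/

/-- `A` is the image of a simple arc from `x` to `y`. -/
def IsArc (A : Set (ℝ × ℝ)) (x y : ℝ × ℝ) : Prop :=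
  ∃ γ : Path x y, Function.Injective γ ∧ Set.range γ = A

/-- A drawing of a simple graph in the plane: vertices are distinct points, each edge is a
simple arc between the points of its endpoints, no edge passes through a vertex other than
its own endpoints, two distinct edges meet in finitely many points, and no three edges have
a common point except at a common endpoint. -/
def SimpleGraph.IsTopDrawing {V : Type} (G : SimpleGraph V) (p : V → ℝ × ℝ)
    (A : Sym2 V → Set (ℝ × ℝ)) : Prop :=
  Function.Injective p ∧
  (∀ a b : V, G.Adj a b → IsArc (A s(a, b)) (p a) (p b)) ∧
  (∀ e ∈ G.edgeSet, ∀ v : V, p v ∈ A e → v ∈ e) ∧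
  (∀ e ∈ G.edgeSet, ∀ f ∈ G.edgeSet, e ≠ f → (A e ∩ A f).Finite) ∧
  (∀ e ∈ G.edgeSet, ∀ f ∈ G.edgeSet, ∀ g ∈ G.edgeSet, e ≠ f → e ≠ g → f ≠ g →
    ∀ q : ℝ × ℝ, q ∈ A e → q ∈ A f → q ∈ A g →
      ∃ v : V, v ∈ e ∧ v ∈ f ∧ v ∈ g ∧ p v = q)

/-- The number of crossings of a topological drawing: pairs (pair of edges, point) where the
point lies on both edges and is not the image of a common endpoint. -/
noncomputable def SimpleGraph.topCrossCount {V : Type} (G : SimpleGraph V) (p : V → ℝ × ℝ)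
    (A : Sym2 V → Set (ℝ × ℝ)) : ℕ :=
  Nat.card {x : Sym2 (Sym2 V) × (ℝ × ℝ) //
    ∃ e f : Sym2 V, x.1 = s(e, f) ∧ e ≠ f ∧ e ∈ G.edgeSet ∧ f ∈ G.edgeSet ∧
      x.2 ∈ A e ∧ x.2 ∈ A f ∧ ¬ ∃ v : V, v ∈ e ∧ v ∈ f ∧ p v = x.2}

/-- The crossing number of a simple graph. -/
noncomputable def SimpleGraph.cr {V : Type} (G : SimpleGraph V) : ℕ :=
  sInf {n | ∃ p A, G.IsTopDrawing p A ∧ G.topCrossCount p A = n}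

/-- A graph is planar if it has a crossing-free drawing in the plane. -/
def SimpleGraph.IsPlanarDrawable {V : Type} (G : SimpleGraph V) : Prop :=
  ∃ p A, G.IsTopDrawing p A ∧ G.topCrossCount p A = 0

/-! ## Minors -/

/-- `X.IsMinorOf G`: `X` can be obtained from a subgraph of `G` by contracting edges;
witnessed by disjoint nonempty connected branch sets, one for each vertex of `X`, with an
edge of `G` between the branch sets of any two adjacent vertices of `X`. -/
def SimpleGraph.IsMinorOf {W V : Type} (X : SimpleGraph W) (G : SimpleGraph V) : Prop :=
  ∃ φ : V → Option W,
    (∀ w : W, (φ ⁻¹' {some w}).Nonempty) ∧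
    (∀ w : W, (G.induce (φ ⁻¹' {some w})).Connected) ∧
    (∀ w₁ w₂ : W, X.Adj w₁ w₂ → ∃ a b : V, φ a = some w₁ ∧ φ b = some w₂ ∧ G.Adj a b)

/-! ## Tree decompositions and treewidth -/

/-- `G` has a tree decomposition of width at most `k`. -/
def SimpleGraph.HasTreewidthAtMost {V : Type} (G : SimpleGraph V) (k : ℕ) : Prop :=
  ∃ (ι : Type) (T : SimpleGraph ι) (B : ι → Set V),
    T.IsTree ∧
    (∀ u v : V, G.Adj u v → ∃ x, u ∈ B x ∧ v ∈ B x) ∧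
    (∀ v : V, {x | v ∈ B x}.Nonempty) ∧
    (∀ v : V, (T.induce {x | v ∈ B x}).Connected) ∧
    (∀ x, (B x).Finite ∧ (B x).ncard ≤ k + 1)

/-! ## Clique-sums -/

/-- `IsCliqueSumOf k G A B`: the graph `G` is obtained by an `l`-clique-sum of the disjoint
graphs `A` and `B` for some `1 ≤ l ≤ k`: cliques of size `l` of `A` and `B` are identified
via a bijection, and some edges of the resulting clique are possibly deleted. -/
def IsCliqueSumOf (k : ℕ) {V V₁ V₂ : Type} (G : SimpleGraph V)
    (A : SimpleGraph V₁) (B : SimpleGraph V₂) : Prop :=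
  ∃ (i : V₁ → V) (j : V₂ → V) (S : Set V₁) (T : Set V₂),
    Function.Injective i ∧ Function.Injective j ∧
    Set.range i ∪ Set.range j = Set.univ ∧
    A.IsClique S ∧ B.IsClique T ∧
    S.Nonempty ∧ S.Finite ∧ S.ncard ≤ k ∧
    i '' S = Set.range i ∩ Set.range j ∧
    j '' T = Set.range i ∩ Set.range j ∧
    (∀ a a', A.Adj a a' → G.Adj (i a) (i a') ∨ (a ∈ S ∧ a' ∈ S)) ∧
    (∀ b b', B.Adj b b' → G.Adj (j b) (j b') ∨ (b ∈ T ∧ b' ∈ T)) ∧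
    (∀ x y, G.Adj x y →
      (∃ a a', A.Adj a a' ∧ i a = x ∧ i a' = y) ∨
      (∃ b b', B.Adj b b' ∧ j b = x ∧ j b' = y))

/-- `CliqueSumGen k P G`: `G` can be obtained by iterated `(≤ k)`-clique-sums of pieces each
of which satisfies the property `P`. -/
inductive CliqueSumGen (k : ℕ) (P : ∀ {W : Type}, SimpleGraph W → Prop) :
    ∀ {V : Type}, SimpleGraph V → Prop
  | base {V : Type} (G : SimpleGraph V) : P G → CliqueSumGen k P G
  | sum {V V₁ V₂ : Type} (G : SimpleGraph V) (G₁ : SimpleGraph V₁) (G₂ : SimpleGraph V₂) :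
      CliqueSumGen k P G₁ → P G₂ → IsCliqueSumOf k G G₁ G₂ → CliqueSumGen k P G

/-! ## Simplicial blowups and agreeability -/

/-- `IsSimplicialBlowup k G Q`: the multigraph `Q` is a `(≤ k)`-simplicial blowup of the
simple graph `G`: it is obtained from `G` by adding an independent set of new vertices, each
adjacent to all vertices of some clique of size at most `k` of `G` (possibly with parallel
edges), and finally deleting zero or more edges from the cliques involved. -/
def IsSimplicialBlowup (k : ℕ) {V W F : Type} (G : SimpleGraph V) (Q : Multigraph W F) :
    Prop :=
  ∃ (ι : V → W) (C : W → Set V),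
    Function.Injective ι ∧
    (∀ u : W, u ∉ Set.range ι → G.IsClique (C u) ∧ (C u).Finite ∧ (C u).ncard ≤ k) ∧
    (∀ u : W, u ∉ Set.range ι → ∀ a ∈ C u, ∃ e : F, Q.ends e = s(u, ι a)) ∧
    (∀ e : F, (∃ a b : V, G.Adj a b ∧ Q.ends e = s(ι a, ι b)) ∨
      (∃ (u : W) (a : V), u ∉ Set.range ι ∧ a ∈ C u ∧ Q.ends e = s(u, ι a))) ∧
    (∀ e f : F, ∀ a b : V, Q.ends e = s(ι a, ι b) → Q.ends f = s(ι a, ι b) → e = f) ∧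
    (∀ a b : V, G.Adj a b →
      (∃ e : F, Q.ends e = s(ι a, ι b)) ∨ ∃ u : W, u ∉ Set.range ι ∧ a ∈ C u ∧ b ∈ C u)

/-- A graph `R` is `(k, c)`-agreeable if for every induced subgraph `R'` of `R` and every
(finite) `(≤ k)`-simplicial blowup `R*` of `R'`, `rcr(R*) ≤ c · Δ(R*) · ‖R*‖`. -/
def Agreeable (k : ℕ) (c : ℝ) {V : Type} (G : SimpleGraph V) : Prop :=
  ∀ (s : Set V) (W F : Type), Finite W → Finite F → ∀ Q : Multigraph W F,
    IsSimplicialBlowup k (G.induce s) Q →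
    (Q.rcr : ℝ) ≤ c * Q.maxDeg * Q.edgeCount

/-! ## H-partitions -/

/-- An `H`-partition of a multigraph `K`: the vertices of the simple graph `H` index
nonempty bags partitioning `V(K)`, and whenever an edge of `K` has endpoints in two distinct
bags, the corresponding vertices of `H` are adjacent. -/
def IsHPartition {V E ι : Type} (K : Multigraph V E) (H : SimpleGraph ι) (B : ι → Set V) :
    Prop :=
  (∀ x : ι, (B x).Nonempty) ∧
  (∀ v : V, ∃! x : ι, v ∈ B x) ∧
  (∀ e : E, ∀ u ∈ K.ends e, ∀ v ∈ K.ends e, ∀ x y : ι,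
    u ∈ B x → v ∈ B y → x ≠ y → H.Adj x y)

/-- A separating triangle of `G`: a triangle whose removal disconnects `G`. -/
def HasSepTriangle {V : Type} (G : SimpleGraph V) : Prop :=
  ∃ a b c : V, G.Adj a b ∧ G.Adj a c ∧ G.Adj b c ∧
    ∃ u v : (({a, b, c} : Set V)ᶜ : Set V),
      ¬ (G.induce (({a, b, c} : Set V)ᶜ)).Reachable u v


namespace RcrAux


def col (a b c : ℝ × ℝ) : Prop :=
  (b.1 - a.1) * (c.2 - a.2) = (b.2 - a.2) * (c.1 - a.1)


@[simp] lemma segOf_mk (a b : ℝ × ℝ) : segOf s(a, b) = segment ℝ a b := rfl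

lemma sym2_exists {α : Type*} (s : Sym2 α) : ∃ a b, s = s(a, b) := by
  induction s using Sym2.ind with
  | _ a b => exact ⟨a, b, rfl⟩

lemma collinear_of_mem_segment {q a b : ℝ × ℝ} (h : q ∈ segment ℝ a b) :
    Collinear ℝ ({q, a, b} : Set (ℝ × ℝ)) := by
  rw [segment_eq_image_lineMap] at h
  obtain ⟨t, _, rfl⟩ := h
  exact collinear_insert_of_mem_affineSpan_pair (AffineMap.lineMap_mem_affineSpan_pair t a b)

/-- points of two distinct segments over a GenPos set: at most one common point -/
lemma seg_inter_subsingleton {S : Set (ℝ × ℝ)} (hS : GenPos S)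
    {s₁ s₂ : Sym2 (ℝ × ℝ)} (h₁ : ∀ x ∈ s₁, x ∈ S) (h₂ : ∀ x ∈ s₂, x ∈ S)
    (hne : s₁ ≠ s₂) : Set.Subsingleton (segOf s₁ ∩ segOf s₂) := by
  intro q hq q' hq'
  by_contra hqq'
  obtain ⟨a, b, rfl⟩ := sym2_exists s₁
  obtain ⟨c, d, rfl⟩ := sym2_exists s₂
  have haS : a ∈ S := h₁ a (by simp)
  have hbS : b ∈ S := h₁ b (by simp)
  have hcS : c ∈ S := h₂ c (by simp)
  have hdS : d ∈ S := h₂ d (by simp)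
  rcases eq_or_ne a b with rfl | hab
  · simp only [segOf_mk, segment_same] at hq hq'
    exact hqq' (hq.1.trans hq'.1.symm)
  rcases eq_or_ne c d with rfl | hcd
  · simp only [segOf_mk, segment_same] at hq hq'
    exact hqq' (hq.2.trans hq'.2.symm)
  have hcol1 : Collinear ℝ ({q, a, b} : Set _) := collinear_of_mem_segment hq.1
  have hcol1' : Collinear ℝ ({q', a, b} : Set _) := collinear_of_mem_segment hq'.1
  have hcol2 : Collinear ℝ ({q, c, d} : Set _) := collinear_of_mem_segment hq.2
  have hcol2' : Collinear ℝ ({q', c, d} : Set _) := collinear_of_mem_segment hq'.2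
  have hmq : q ∈ line[ℝ, a, b] :=
    hcol1.mem_affineSpan_of_mem_of_ne (by simp) (by simp) (by simp) hab
  have hmq' : q' ∈ line[ℝ, a, b] :=
    hcol1'.mem_affineSpan_of_mem_of_ne (by simp) (by simp) (by simp) hab
  have hmq2 : q ∈ line[ℝ, c, d] :=
    hcol2.mem_affineSpan_of_mem_of_ne (by simp) (by simp) (by simp) hcd
  have hmq2' : q' ∈ line[ℝ, c, d] :=
    hcol2'.mem_affineSpan_of_mem_of_ne (by simp) (by simp) (by simp) hcd
  have hC1 : Collinear ℝ ({q, q', a, b} : Set _) :=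
    collinear_insert_insert_of_mem_affineSpan_pair hmq hmq'
  have hC2 : Collinear ℝ ({q, q', c, d} : Set _) :=
    collinear_insert_insert_of_mem_affineSpan_pair hmq2 hmq2'
  have hma : a ∈ line[ℝ, q, q'] :=
    hC1.mem_affineSpan_of_mem_of_ne (by simp) (by simp) (by simp) hqq'
  have hmb : b ∈ line[ℝ, q, q'] :=
    hC1.mem_affineSpan_of_mem_of_ne (by simp) (by simp) (by simp) hqq'
  have hmc : c ∈ line[ℝ, q, q'] :=
    hC2.mem_affineSpan_of_mem_of_ne (by simp) (by simp) (by simp) hqq'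
  have hmd : d ∈ line[ℝ, q, q'] :=
    hC2.mem_affineSpan_of_mem_of_ne (by simp) (by simp) (by simp) hqq'
  have habc : Collinear ℝ ({a, b, c} : Set _) :=
    collinear_triple_of_mem_affineSpan_pair hma hmb hmc
  have habd : Collinear ℝ ({a, b, d} : Set _) :=
    collinear_triple_of_mem_affineSpan_pair hma hmb hmd
  by_cases hc : c = a ∨ c = b
  · by_cases hd : d = a ∨ d = b
    · apply hne
      rcases hc with rfl | rfl <;> rcases hd with rfl | rfl
      · exact absurd rfl hcd
      · rfl
      · rw [Sym2.eq_swap]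
      · exact absurd rfl hcd.symm
    · push_neg at hd
      exact hS.1 a haS b hbS d hdS hab (Ne.symm hd.1) (Ne.symm hd.2) habd
  · push_neg at hc
    exact hS.1 a haS b hbS c hcS hab (Ne.symm hc.1) (Ne.symm hc.2) habc

/-- a GenPos point on a segment over S is an endpoint -/
lemma mem_sym2_of_mem_seg {S : Set (ℝ × ℝ)} (hS : GenPos S)
    {a : ℝ × ℝ} (ha : a ∈ S) {s : Sym2 (ℝ × ℝ)} (h : ∀ x ∈ s, x ∈ S)
    (hseg : a ∈ segOf s) : a ∈ s := by
  obtain ⟨c, d, rfl⟩ := sym2_exists s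
  rcases eq_or_ne c d with rfl | hcd
  · simp only [segOf_mk, segment_same, Set.mem_singleton_iff] at hseg
    simp [hseg]
  by_cases hmem : a = c ∨ a = d
  · rcases hmem with rfl | rfl <;> simp
  push_neg at hmem
  exfalso
  have := collinear_of_mem_segment (segOf_mk c d ▸ hseg)
  have hcol : Collinear ℝ ({c, d, a} : Set _) := by
    have hset : ({c, d, a} : Set (ℝ × ℝ)) = {a, c, d} := by ext x; simp; tauto
    rw [hset]; exact this
  exact hS.1 c (h c (by simp)) d (h d (by simp)) a ha hcd hmem.1.symm hmem.2.symm hcol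



lemma sym2_exists'  {α : Type*} (s : Sym2 α) : ∃ a b, s = s(a, b) := by
  induction s using Sym2.ind with
  | _ a b => exact ⟨a, b, rfl⟩





lemma smul_fst (r : ℝ) (v : ℝ × ℝ) : (r • v).1 = r * v.1 := rfl
lemma smul_snd (r : ℝ) (v : ℝ × ℝ) : (r • v).2 = r * v.2 := rfl

lemma collinear_iff_col {a b c : ℝ × ℝ} :
    Collinear ℝ ({a, b, c} : Set (ℝ × ℝ)) ↔ col a b c := by
  constructor
  · intro h
    rw [collinear_iff_of_mem (Set.mem_insert a _)] at h
    obtain ⟨v, hv⟩ := h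
    obtain ⟨rb, hrb⟩ := hv b (by simp)
    obtain ⟨rc, hrc⟩ := hv c (by simp)
    have hb1 : b.1 = rb * v.1 + a.1 := by rw [hrb]; rfl
    have hb2 : b.2 = rb * v.2 + a.2 := by rw [hrb]; rfl
    have hc1 : c.1 = rc * v.1 + a.1 := by rw [hrc]; rfl
    have hc2 : c.2 = rc * v.2 + a.2 := by rw [hrc]; rfl
    unfold col; rw [hb1, hb2, hc1, hc2]; ring
  · intro h
    rcases eq_or_ne b a with rfl | hba
    · have : ({b, b, c} : Set (ℝ × ℝ)) = {b, c} := by simp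
      rw [this]; exact collinear_pair ℝ b c
    rw [collinear_iff_of_mem (Set.mem_insert a _)]
    refine ⟨b - a, ?_⟩
    have key : ∀ p : ℝ × ℝ, col a b p → ∃ r : ℝ, p = r • (b - a) +ᵥ a := by
      intro p hp
      rcases eq_or_ne (b.1 - a.1) 0 with h1 | h1
      · have h2 : b.2 - a.2 ≠ 0 := by
          intro h2; apply hba; apply Prod.ext <;> [linarith; linarith]
        refine ⟨(p.2 - a.2) / (b.2 - a.2), ?_⟩
        unfold col at hp
        apply Prod.ext
        · show p.1 = _ * (b - a).1 + a.1
          have : (b - a).1 = b.1 - a.1 := rfl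
          rw [this, h1]
          rw [h1] at hp
          have : p.1 - a.1 = 0 := by
            have h0 : (b.2 - a.2) * (p.1 - a.1) = 0 := by linarith [hp]
            rcases mul_eq_zero.1 h0 with h | h
            · exact absurd h h2
            · exact h
          simp; linarith
        · show p.2 = _ * (b - a).2 + a.2
          have : (b - a).2 = b.2 - a.2 := rfl
          rw [this]; field_simp; ring
      · refine ⟨(p.1 - a.1) / (b.1 - a.1), ?_⟩
        unfold col at hp
        apply Prod.ext
        · show p.1 = _ * (b - a).1 + a.1
          have : (b - a).1 = b.1 - a.1 := rfl
          rw [this]; field_simp; ring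
        · show p.2 = _ * (b - a).2 + a.2
          have : (b - a).2 = b.2 - a.2 := rfl
          rw [this]
          field_simp
          nlinarith [hp]
    intro p hp
    rcases hp with rfl | rfl | rfl
    · exact ⟨0, by simp⟩
    · exact ⟨1, by simp⟩
    · exact key _ h





/-- the moment curve point -/
noncomputable def zfun (c : ℝ × ℝ) (ε t : ℝ) : ℝ × ℝ := (c.1 + (ε/2)*t, c.2 + (ε/2)*t^2)

lemma badset_finite {a b c : ℝ × ℝ} {ε : ℝ} (hab : a ≠ b) (hε : 0 < ε) :
    {t : ℝ | col a b (zfun c ε t)}.Finite := by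
  classical
  set A : ℝ := (b.1 - a.1) * (ε/2) with hA
  set Bc : ℝ := -((b.2 - a.2) * (ε/2)) with hB
  set Cc : ℝ := (b.1 - a.1) * (c.2 - a.2) - (b.2 - a.2) * (c.1 - a.1) with hC
  have hAB : A ≠ 0 ∨ Bc ≠ 0 := by
    have : b.1 - a.1 ≠ 0 ∨ b.2 - a.2 ≠ 0 := by
      by_contra hcon
      push_neg at hcon
      exact hab (Prod.ext (by linarith [hcon.1]) (by linarith [hcon.2]))
    rcases this with h | h
    · left; exact mul_ne_zero h (by positivity)
    · right; simp only [hB, neg_ne_zero]; exact mul_ne_zero h (by positivity)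
  set p : Polynomial ℝ := Polynomial.C A * Polynomial.X ^ 2 + Polynomial.C Bc * Polynomial.X
      + Polynomial.C Cc with hp
  have hpne : p ≠ 0 := by
    intro h0
    rcases hAB with h | h
    · apply h
      have := congrArg (fun q => Polynomial.coeff q 2) h0
      simpa [hp] using this
    · apply h
      have := congrArg (fun q => Polynomial.coeff q 1) h0
      simpa [hp] using this
  apply Set.Finite.subset (Polynomial.finite_setOf_isRoot hpne)
  intro t ht
  simp only [Set.mem_setOf_eq] at ht ⊢
  have : Polynomial.IsRoot p t := by
    unfold col zfun at ht
    simp only [Polynomial.IsRoot, hp, Polynomial.eval_add, Polynomial.eval_mul,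
      Polynomial.eval_C, Polynomial.eval_X, Polynomial.eval_pow]
    simp only [hA, hB, hC]
    nlinarith [ht]
  exact this

lemma hitset_subsingleton {c p : ℝ × ℝ} {ε : ℝ} (hε : 0 < ε) :
    {t : ℝ | zfun c ε t = p}.Subsingleton := by
  intro t ht t' ht'
  simp only [Set.mem_setOf_eq, zfun] at ht ht'
  have h1 : c.1 + (ε/2)*t = p.1 := congrArg Prod.fst ht
  have h1' : c.1 + (ε/2)*t' = p.1 := congrArg Prod.fst ht'
  have : (ε/2) * t = (ε/2) * t' := by linarith
  exact mul_left_cancel₀ (by positivity) this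

lemma exists_generic_point (L : Set ((ℝ × ℝ) × (ℝ × ℝ))) (hLfin : L.Finite)
    (P : Set (ℝ × ℝ)) (hPfin : P.Finite) (c : ℝ × ℝ) (ε : ℝ) (hε : 0 < ε) :
    ∃ z : ℝ × ℝ, dist z c < ε ∧ z ∉ P ∧
      ∀ p ∈ L, p.1 ≠ p.2 → ¬ col p.1 p.2 z := by
  classical
  set Bad : Set ℝ := (⋃ p ∈ {p ∈ L | p.1 ≠ p.2}, {t : ℝ | col p.1 p.2 (zfun c ε t)}) ∪
    (⋃ p ∈ P, {t : ℝ | zfun c ε t = p}) with hBad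
  have hBadfin : Bad.Finite := by
    apply Set.Finite.union
    · exact Set.Finite.biUnion (hLfin.subset (Set.sep_subset _ _))
        (fun p hp => badset_finite hp.2 hε)
    · exact Set.Finite.biUnion hPfin (fun p _ => (hitset_subsingleton hε).finite)
  have hIoo : (Set.Ioo (0:ℝ) 1).Infinite := Set.Ioo_infinite (by norm_num)
  obtain ⟨t, htIoo, htBad⟩ := (hIoo.diff hBadfin).nonempty
  refine ⟨zfun c ε t, ?_, ?_, ?_⟩
  · rw [Prod.dist_eq]
    simp only [zfun]
    have h0 : (0:ℝ) < t := htIoo.1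
    have h1 : t < 1 := htIoo.2
    have e1 : dist (c.1 + ε/2*t) c.1 = ε/2*t := by
      rw [Real.dist_eq]
      have h : c.1 + ε/2*t - c.1 = ε/2*t := by ring
      rw [h, abs_of_nonneg (by nlinarith)]
    have e2 : dist (c.2 + ε/2*t^2) c.2 = ε/2*t^2 := by
      rw [Real.dist_eq]
      have h : c.2 + ε/2*t^2 - c.2 = ε/2*t^2 := by ring
      rw [h, abs_of_nonneg (by nlinarith [sq_nonneg t])]
    rw [max_lt_iff]
    constructor
    · rw [e1]; nlinarith
    · rw [e2]
      have ht2 : t^2 < 1 := by nlinarith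
      have : ε/2*t^2 < ε/2*1 := mul_lt_mul_of_pos_left ht2 (by positivity)
      linarith
  · intro hmem
    exact htBad (Or.inr (Set.mem_biUnion hmem rfl))
  · intro p hp hne hcol
    exact htBad (Or.inl (Set.mem_biUnion (⟨hp, hne⟩ : p ∈ {p ∈ L | p.1 ≠ p.2}) hcol))


lemma sym2_nonempty {α : Type*} (s : Sym2 α) : ∃ x, x ∈ s := by
  obtain ⟨a, b, rfl⟩ := sym2_exists s
  exact ⟨a, Sym2.mem_mk_left a b⟩

lemma genpos_insert {S : Set (ℝ × ℝ)} (hfin : S.Finite) (hS : GenPos S)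
    (c : ℝ × ℝ) {ε : ℝ} (hε : 0 < ε) :
    ∃ z, dist z c < ε ∧ z ∉ S ∧ GenPos (insert z S) := by
  classical
  set T : Set (Sym2 (ℝ × ℝ)) := (fun p : (ℝ × ℝ) × (ℝ × ℝ) => s(p.1, p.2)) '' (S ×ˢ S) with hT
  have hTfin : T.Finite := (hfin.prod hfin).image _
  have hTmem : ∀ s ∈ T, ∀ x ∈ s, x ∈ S := by
    rintro s ⟨⟨a, b⟩, hab, rfl⟩ x hx
    rcases Sym2.mem_iff.1 hx with rfl | rfl
    · exact hab.1
    · exact hab.2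
  have hTall : ∀ s : Sym2 (ℝ × ℝ), (∀ x ∈ s, x ∈ S) → s ∈ T := by
    intro s hs
    obtain ⟨a, b, rfl⟩ := sym2_exists s
    exact ⟨(a, b), ⟨hs a (Sym2.mem_mk_left a b), hs b (Sym2.mem_mk_right a b)⟩, rfl⟩
  set Q : Set (ℝ × ℝ) :=
    ⋃ p ∈ (T ×ˢ T) ∩ {p : Sym2 (ℝ × ℝ) × Sym2 (ℝ × ℝ) | p.1 ≠ p.2},
      (segOf p.1 ∩ segOf p.2) with hQdef
  have hQfin : Q.Finite := by
    apply Set.Finite.biUnion ((hTfin.prod hTfin).subset Set.inter_subset_left)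
    rintro ⟨s₁, s₂⟩ ⟨hmem, hne⟩
    exact (seg_inter_subsingleton hS (hTmem s₁ hmem.1) (hTmem s₂ hmem.2) hne).finite
  have hQ : ∀ s₁ s₂ : Sym2 (ℝ × ℝ), (∀ x ∈ s₁, x ∈ S) → (∀ x ∈ s₂, x ∈ S) → s₁ ≠ s₂ →
      ∀ q, q ∈ segOf s₁ → q ∈ segOf s₂ → q ∈ Q := by
    intro s₁ s₂ h₁ h₂ hne q hq1 hq2
    exact Set.mem_biUnion (⟨Set.mk_mem_prod (hTall s₁ h₁) (hTall s₂ h₂), hne⟩ :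
      (s₁, s₂) ∈ (T ×ˢ T) ∩ {p : Sym2 (ℝ × ℝ) × Sym2 (ℝ × ℝ) | p.1 ≠ p.2}) ⟨hq1, hq2⟩
  obtain ⟨z, hzc, hzS, hzL⟩ := exists_generic_point ((S ×ˢ S) ∪ (S ×ˢ Q))
    ((hfin.prod hfin).union (hfin.prod hQfin)) S hfin c ε hε
  have hncol : ∀ a ∈ S, ∀ b ∈ S, a ≠ b → ¬ Collinear ℝ ({a, b, z} : Set (ℝ × ℝ)) := by
    intro a ha b hb hab hcol
    exact hzL (a, b) (Or.inl (Set.mk_mem_prod ha hb)) hab (collinear_iff_col.1 hcol)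
  have hncolQ : ∀ a ∈ S, ∀ q ∈ Q, a ≠ q → ¬ Collinear ℝ ({a, q, z} : Set (ℝ × ℝ)) := by
    intro a ha q hq hab hcol
    exact hzL (a, q) (Or.inr (Set.mk_mem_prod ha hq)) hab (collinear_iff_col.1 hcol)
  have hznotseg : ∀ s : Sym2 (ℝ × ℝ), (∀ x ∈ s, x ∈ S) → z ∉ segOf s := by
    intro s hs hzseg
    obtain ⟨a, b, rfl⟩ := sym2_exists s
    have haS := hs a (Sym2.mem_mk_left a b)
    have hbS := hs b (Sym2.mem_mk_right a b)
    rcases eq_or_ne a b with rfl | hab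
    · rw [segOf_mk, segment_same, Set.mem_singleton_iff] at hzseg
      exact hzS (hzseg ▸ haS)
    · have hcol := collinear_of_mem_segment (segOf_mk a b ▸ hzseg)
      have hset : ({z, a, b} : Set (ℝ × ℝ)) = {a, b, z} := by ext u; simp; tauto
      exact hncol a haS b hbS hab (hset ▸ hcol)
  have hold : ∀ s : Sym2 (ℝ × ℝ), (∀ x ∈ s, x ∈ insert z S) → z ∉ s → ∀ x ∈ s, x ∈ S := by
    intro s h hzs x hx
    rcases h x hx with rfl | hxS
    · exact absurd hx hzs
    · exact hxS
  have keyA : ∀ s₁ s₂ s₃ : Sym2 (ℝ × ℝ), z ∈ s₁ → (∀ x ∈ s₁, x ∈ insert z S) →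
      (∀ x ∈ s₂, x ∈ S) → (∀ x ∈ s₃, x ∈ S) → s₂ ≠ s₃ →
      ∀ q, q ∈ segOf s₁ → q ∈ segOf s₂ → q ∈ segOf s₃ →
      ∃ x, x ∈ s₁ ∧ x ∈ s₂ ∧ x ∈ s₃ := by
    intro s₁ s₂ s₃ hz1 h₁ h₂ h₃ h23 q hq1 hq2 hq3
    obtain ⟨a, rfl⟩ := Sym2.mem_iff_exists.1 hz1
    rcases h₁ a (Sym2.mem_mk_right z a) with rfl | haS
    · rw [segOf_mk, segment_same, Set.mem_singleton_iff] at hq1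
      exact absurd (hq1 ▸ hq2) (hznotseg s₂ h₂)
    · have hqQ : q ∈ Q := hQ s₂ s₃ h₂ h₃ h23 q hq2 hq3
      by_cases hqa : q = a
      · subst hqa
        exact ⟨q, Sym2.mem_mk_right z q, mem_sym2_of_mem_seg hS haS h₂ hq2,
          mem_sym2_of_mem_seg hS haS h₃ hq3⟩
      · exfalso
        have hcol := collinear_of_mem_segment (segOf_mk z a ▸ hq1)
        have hset : ({q, z, a} : Set (ℝ × ℝ)) = {a, q, z} := by ext u; simp; tauto
        exact hncolQ a haS q hqQ (Ne.symm hqa) (hset ▸ hcol)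
  have keyB : ∀ s₁ s₂ s₃ : Sym2 (ℝ × ℝ), z ∈ s₁ → z ∈ s₂ →
      (∀ x ∈ s₁, x ∈ insert z S) → (∀ x ∈ s₂, x ∈ insert z S) → (∀ x ∈ s₃, x ∈ S) →
      s₁ ≠ s₂ →
      ∀ q, q ∈ segOf s₁ → q ∈ segOf s₂ → q ∈ segOf s₃ →
      ∃ x, x ∈ s₁ ∧ x ∈ s₂ ∧ x ∈ s₃ := by
    intro s₁ s₂ s₃ hz1 hz2 h₁ h₂ h₃ h12 q hq1 hq2 hq3
    obtain ⟨a, rfl⟩ := Sym2.mem_iff_exists.1 hz1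
    obtain ⟨b, rfl⟩ := Sym2.mem_iff_exists.1 hz2
    rcases h₁ a (Sym2.mem_mk_right z a) with rfl | haS
    · rw [segOf_mk, segment_same, Set.mem_singleton_iff] at hq1
      exact absurd (hq1 ▸ hq3) (hznotseg s₃ h₃)
    rcases h₂ b (Sym2.mem_mk_right z b) with rfl | hbS
    · rw [segOf_mk, segment_same, Set.mem_singleton_iff] at hq2
      exact absurd (hq2 ▸ hq3) (hznotseg s₃ h₃)
    have hab : a ≠ b := fun h => h12 (by rw [h])
    by_cases hqz : q = z
    · exact absurd (hqz ▸ hq3) (hznotseg s₃ h₃)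
    · exfalso
      have hcola : Collinear ℝ ({q, z, a} : Set (ℝ × ℝ)) :=
        collinear_of_mem_segment (segOf_mk z a ▸ hq1)
      have hcolb : Collinear ℝ ({q, z, b} : Set (ℝ × ℝ)) :=
        collinear_of_mem_segment (segOf_mk z b ▸ hq2)
      have hma : a ∈ line[ℝ, q, z] :=
        hcola.mem_affineSpan_of_mem_of_ne (by simp) (by simp) (by simp) hqz
      have hmb : b ∈ line[ℝ, q, z] :=
        hcolb.mem_affineSpan_of_mem_of_ne (by simp) (by simp) (by simp) hqz
      have hmz : z ∈ line[ℝ, q, z] := right_mem_affineSpan_pair ℝ q z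
      exact hncol a haS b hbS hab (collinear_triple_of_mem_affineSpan_pair hma hmb hmz)
  refine ⟨z, hzc, hzS, ?_, ?_⟩
  · -- no three collinear
    intro a ha b hb c' hc' hab hac hbc hcol
    rcases ha with rfl | haS
    · rcases hb with rfl | hbS
      · exact hab rfl
      rcases hc' with rfl | hcS
      · exact hac rfl
      have hset : ({a, b, c'} : Set (ℝ × ℝ)) = {b, c', a} := by ext u; simp; tauto
      exact hncol b hbS c' hcS hbc (hset ▸ hcol)
    · rcases hb with rfl | hbS
      · rcases hc' with rfl | hcS
        · exact hbc rfl
        have hset : ({a, b, c'} : Set (ℝ × ℝ)) = {a, c', b} := by ext u; simp; tauto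
        exact hncol a haS c' hcS hac (hset ▸ hcol)
      · rcases hc' with rfl | hcS
        · exact hncol a haS b hbS hab hcol
        · exact hS.1 a haS b hbS c' hcS hab hac hbc hcol
  · -- no three concurrent segments
    intro s₁ s₂ s₃ h₁ h₂ h₃ h12 h13 h23 q hq1 hq2 hq3
    by_cases hz1 : z ∈ s₁ <;> by_cases hz2 : z ∈ s₂ <;> by_cases hz3 : z ∈ s₃
    · exact ⟨z, hz1, hz2, hz3⟩
    · exact keyB s₁ s₂ s₃ hz1 hz2 h₁ h₂ (hold s₃ h₃ hz3) h12 q hq1 hq2 hq3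
    · obtain ⟨x, a1, a3, a2⟩ := keyB s₁ s₃ s₂ hz1 hz3 h₁ h₃ (hold s₂ h₂ hz2) h13 q hq1 hq3 hq2
      exact ⟨x, a1, a2, a3⟩
    · obtain ⟨x, a1, a2, a3⟩ := keyA s₁ s₂ s₃ hz1 h₁ (hold s₂ h₂ hz2) (hold s₃ h₃ hz3) h23 q hq1 hq2 hq3
      exact ⟨x, a1, a2, a3⟩
    · obtain ⟨x, a2, a3, a1⟩ := keyB s₂ s₃ s₁ hz2 hz3 h₂ h₃ (hold s₁ h₁ hz1) h23 q hq2 hq3 hq1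
      exact ⟨x, a1, a2, a3⟩
    · obtain ⟨x, a2, a1, a3⟩ := keyA s₂ s₁ s₃ hz2 h₂ (hold s₁ h₁ hz1) (hold s₃ h₃ hz3) h13 q hq2 hq1 hq3
      exact ⟨x, a1, a2, a3⟩
    · obtain ⟨x, a3, a1, a2⟩ := keyA s₃ s₁ s₂ hz3 h₃ (hold s₁ h₁ hz1) (hold s₂ h₂ hz2) h12 q hq3 hq1 hq2
      exact ⟨x, a1, a2, a3⟩
    · exact hS.2 s₁ s₂ s₃ (hold s₁ h₁ hz1) (hold s₂ h₂ hz2) (hold s₃ h₃ hz3) h12 h13 h23 q hq1 hq2 hq3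

lemma genpos_empty : GenPos ∅ := by
  constructor
  · intro a ha; exact absurd ha (Set.notMem_empty a)
  · intro s₁ _ _ h₁ _ _ _ _ _ _ _ _ _
    obtain ⟨x, hx⟩ := sym2_nonempty s₁
    exact absurd (h₁ x hx) (Set.notMem_empty x)

lemma genpos_points (n : ℕ) (t : Fin n → ℝ × ℝ) {ε : ℝ} (hε : 0 < ε) :
    ∃ q : Fin n → ℝ × ℝ, Function.Injective q ∧ GenPos (Set.range q) ∧
      ∀ i, dist (q i) (t i) < ε := by
  induction n with
  | zero =>
    refine ⟨Fin.elim0, fun i => i.elim0, ?_, fun i => i.elim0⟩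
    rw [Set.range_eq_empty]
    exact genpos_empty
  | succ n IH =>
    obtain ⟨q', hinj, hgen, hdist⟩ := IH (t ∘ Fin.succ)
    obtain ⟨z, hzc, hznS, hgen'⟩ :=
      genpos_insert (Set.finite_range q') hgen (t 0) hε
    refine ⟨Fin.cons z q', ?_, ?_, ?_⟩
    · intro i j hij
      induction i using Fin.cases <;> induction j using Fin.cases
      · rfl
      · rw [Fin.cons_zero, Fin.cons_succ] at hij
        exact absurd (hij ▸ Set.mem_range_self _) hznS
      · rw [Fin.cons_zero, Fin.cons_succ] at hij
        exact absurd (hij ▸ Set.mem_range_self _) hznS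
      · rw [Fin.cons_succ, Fin.cons_succ] at hij
        exact congrArg Fin.succ (hinj hij)
    · rw [Fin.range_cons]
      exact hgen'
    · intro i
      induction i using Fin.cases
      · rw [Fin.cons_zero]; exact hzc
      · rw [Fin.cons_succ]; exact hdist _

lemma genpos_place {V : Type} [Fintype V] (t : V → ℝ × ℝ) {ε : ℝ} (hε : 0 < ε) :
    ∃ q : V → ℝ × ℝ, Function.Injective q ∧ GenPos (Set.range q) ∧
      ∀ v, dist (q v) (t v) < ε := by
  obtain ⟨q₀, hinj, hgen, hdist⟩ := genpos_points (Fintype.card V)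
    (t ∘ (Fintype.equivFin V).symm) hε
  refine ⟨q₀ ∘ (Fintype.equivFin V), hinj.comp (Fintype.equivFin V).injective, ?_, ?_⟩
  · rw [Set.range_comp, Equiv.range_eq_univ, Set.image_univ]
    exact hgen
  · intro v
    have := hdist (Fintype.equivFin V v)
    simpa using this

lemma isCompact_segment' (a b : ℝ × ℝ) : IsCompact (segment ℝ a b) := by
  rw [segment_eq_image_lineMap]
  apply IsCompact.image isCompact_Icc
  have : Continuous (fun t : ℝ => AffineMap.lineMap a b t) := by
    simp only [AffineMap.lineMap_apply_module]
    continuity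
  exact this

lemma isCompact_segOf (s : Sym2 (ℝ × ℝ)) : IsCompact (segOf s) := by
  obtain ⟨a, b, rfl⟩ := sym2_exists s
  exact isCompact_segment' a b

lemma segOf_nonempty (s : Sym2 (ℝ × ℝ)) : (segOf s).Nonempty := by
  obtain ⟨a, b, rfl⟩ := sym2_exists s
  exact ⟨a, left_mem_segment ℝ a b⟩

lemma pos_dist_of_disjoint {P Q : Set (ℝ × ℝ)} (hP : IsCompact P) (hQ : IsCompact Q)
    (hPn : P.Nonempty) (hQn : Q.Nonempty) (hdisj : P ∩ Q = ∅) :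
    ∃ δ > 0, ∀ p ∈ P, ∀ q ∈ Q, δ ≤ dist p q := by
  have hcomp : IsCompact (P ×ˢ Q) := hP.prod hQ
  have hne : (P ×ˢ Q).Nonempty := hPn.prod hQn
  have hcont : ContinuousOn (fun x : (ℝ × ℝ) × (ℝ × ℝ) => dist x.1 x.2) (P ×ˢ Q) :=
    (continuous_dist.comp (continuous_fst.prodMk continuous_snd)).continuousOn
  obtain ⟨x, hx, hmin⟩ := hcomp.exists_isMinOn hne hcont
  refine ⟨dist x.1 x.2, ?_, ?_⟩
  · rcases eq_or_lt_of_le (dist_nonneg : (0:ℝ) ≤ dist x.1 x.2) with h | h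
    · exfalso
      have : x.1 = x.2 := dist_eq_zero.1 h.symm
      have : x.1 ∈ P ∩ Q := ⟨hx.1, this ▸ hx.2⟩
      rw [hdisj] at this
      exact this
    · exact h
  · intro p hp q hq
    exact hmin (Set.mk_mem_prod hp hq)

lemma segment_approx {a b A B q : ℝ × ℝ} {ε : ℝ}
    (ha : dist a A ≤ ε) (hb : dist b B ≤ ε) (hq : q ∈ segment ℝ a b) :
    ∃ r ∈ segment ℝ A B, dist q r ≤ ε := by
  obtain ⟨u, v, hu, hv, huv, rfl⟩ := hq
  refine ⟨u • A + v • B, ⟨u, v, hu, hv, huv, rfl⟩, ?_⟩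
  have : u • a + v • b - (u • A + v • B) = u • (a - A) + v • (b - B) := by
    module
  rw [dist_eq_norm, this]
  calc ‖u • (a - A) + v • (b - B)‖ ≤ ‖u • (a - A)‖ + ‖v • (b - B)‖ := norm_add_le _ _
    _ = u * ‖a - A‖ + v * ‖b - B‖ := by
        rw [norm_smul, norm_smul, Real.norm_of_nonneg hu, Real.norm_of_nonneg hv]
    _ ≤ u * ε + v * ε := by
        have h1 : ‖a - A‖ ≤ ε := by rw [← dist_eq_norm]; exact ha
        have h2 : ‖b - B‖ ≤ ε := by rw [← dist_eq_norm]; exact hb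
        have g1 := mul_le_mul_of_nonneg_left h1 hu
        have g2 := mul_le_mul_of_nonneg_left h2 hv
        linarith
    _ = ε := by rw [← add_mul, huv, one_mul]



lemma card_T2 {γ E ι : Type} [Fintype γ] [Fintype E] (bagP : E → Sym2 ι)
    (ord : γ → Sym2 ι × Sym2 ι) (m : ℕ) (hN : ∀ g, Nat.card {e : E // bagP e = g} ≤ m) :
    Nat.card {x : γ × E × E // bagP x.2.1 = (ord x.1).1 ∧ bagP x.2.2 = (ord x.1).2} ≤
      Nat.card γ * (m * m) := by
  classical
  have hinj : Function.Injective
      (fun x : {x : γ × E × E // bagP x.2.1 = (ord x.1).1 ∧ bagP x.2.2 = (ord x.1).2} =>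
        (⟨x.1.1, (⟨x.1.2.1, x.2.1⟩, ⟨x.1.2.2, x.2.2⟩)⟩ :
          Σ c : γ, ({e : E // bagP e = (ord c).1} × {e : E // bagP e = (ord c).2}))) := by
    rintro ⟨⟨c, e, f⟩, he, hf⟩ ⟨⟨c', e', f'⟩, he', hf'⟩ h
    obtain ⟨h1, h2⟩ := Sigma.mk.inj_iff.1 h
    subst h1
    rw [heq_iff_eq, Prod.ext_iff, Subtype.ext_iff, Subtype.ext_iff] at h2
    simp only [Subtype.mk.injEq, Prod.mk.injEq]
    simp only [Subtype.mk.injEq] at h2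
    exact ⟨trivial, h2.1, h2.2⟩
  calc Nat.card {x : γ × E × E // bagP x.2.1 = (ord x.1).1 ∧ bagP x.2.2 = (ord x.1).2}
      ≤ Nat.card (Σ c : γ, ({e : E // bagP e = (ord c).1} × {e : E // bagP e = (ord c).2})) :=
        Nat.card_le_card_of_injective _ hinj
    _ ≤ Nat.card γ * (m * m) := by
        rw [Nat.card_eq_fintype_card, Fintype.card_sigma]
        have hb : ∀ c : γ,
            Fintype.card ({e : E // bagP e = (ord c).1} × {e : E // bagP e = (ord c).2}) ≤ m * m := by
          intro c
          rw [Fintype.card_prod]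
          have h1 := hN (ord c).1
          have h2 := hN (ord c).2
          rw [Nat.card_eq_fintype_card] at h1 h2
          exact Nat.mul_le_mul h1 h2
        calc ∑ c : γ, Fintype.card ({e : E // bagP e = (ord c).1} × {e : E // bagP e = (ord c).2})
            ≤ ∑ _c : γ, m * m := Finset.sum_le_sum fun c _ => hb c
          _ = Fintype.card γ * (m * m) := by rw [Finset.sum_const, Finset.card_univ, smul_eq_mul]
          _ = Nat.card γ * (m * m) := by rw [Nat.card_eq_fintype_card]




lemma deg_le_maxDeg {V E : Type} [Fintype V] (K : Multigraph V E) (v : V) :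
    K.deg v ≤ K.maxDeg :=
  le_csSup ((Set.finite_range K.deg).bddAbove) (Set.mem_range_self v)

lemma card_fiber_le {V E ι : Type} [Fintype V] [Fintype E] (K : Multigraph V E)
    (B : ι → Set V) (bagf : V → ι) (w : ℕ)
    (hbagf : ∀ v, v ∈ B (bagf v)) (hwidth : ∀ x, (B x).ncard ≤ w)
    (g : Sym2 ι) :
    Nat.card {e : E // (K.ends e).map bagf = g} ≤ w * K.maxDeg := by
  classical
  obtain ⟨x, y, rfl⟩ := sym2_exists g
  have hex : ∀ e : {e : E // (K.ends e).map bagf = s(x, y)},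
      ∃ u, u ∈ K.ends e.val ∧ bagf u = x := by
    intro e
    have hx : x ∈ (K.ends e.val).map bagf := by rw [e.2]; exact Sym2.mem_mk_left x y
    obtain ⟨u, hu, hbu⟩ := Sym2.mem_map.1 hx
    exact ⟨u, hu, hbu⟩
  choose uf huf hbuf using hex
  have hinj : Function.Injective
      (fun e : {e : E // (K.ends e).map bagf = s(x, y)} =>
        (⟨(uf e, e.val), ⟨by have h := hbagf (uf e); rwa [hbuf e] at h, huf e⟩⟩ :
          {p : V × E // p.1 ∈ B x ∧ p.1 ∈ K.ends p.2})) := by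
    intro e e' h
    rw [Subtype.ext_iff, Prod.ext_iff] at h
    exact Subtype.ext h.2
  refine le_trans (Nat.card_le_card_of_injective _ hinj) ?_
  have hinj2 : Function.Injective
      (fun p : {p : V × E // p.1 ∈ B x ∧ p.1 ∈ K.ends p.2} =>
        (⟨⟨p.1.1, p.2.1⟩, ⟨p.1.2, p.2.2⟩⟩ :
          Σ u : ↥(B x), {e : E // u.val ∈ K.ends e})) := by
    rintro ⟨⟨u, e⟩, hu, he⟩ ⟨⟨u', e'⟩, hu', he'⟩ h
    obtain ⟨h1, h2⟩ := Sigma.mk.inj_iff.1 h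
    rw [Subtype.mk.injEq] at h1
    subst h1
    rw [heq_iff_eq, Subtype.ext_iff] at h2
    simp only [Subtype.mk.injEq, Prod.mk.injEq]
    exact ⟨trivial, h2⟩
  refine le_trans (Nat.card_le_card_of_injective _ hinj2) ?_
  haveI : Fintype ↥(B x) := Fintype.ofFinite _
  rw [Nat.card_eq_fintype_card, Fintype.card_sigma]
  have : ∀ u : ↥(B x), Fintype.card {e : E // u.val ∈ K.ends e} ≤ K.maxDeg := by
    intro u
    rw [← Nat.card_eq_fintype_card]
    exact deg_le_maxDeg K u.val
  calc ∑ u : ↥(B x), Fintype.card {e : E // u.val ∈ K.ends e}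
      ≤ ∑ _u : ↥(B x), K.maxDeg := Finset.sum_le_sum fun u _ => this u
    _ = Fintype.card ↥(B x) * K.maxDeg := by
        rw [Finset.sum_const, Finset.card_univ, smul_eq_mul]
    _ ≤ w * K.maxDeg := by
        apply Nat.mul_le_mul_right
        have := hwidth x
        rwa [Set.ncard_eq_toFinset_card', Set.toFinset_card] at this

lemma two_mul_le_sq_add_sq (a b : ℕ) : 2 * (a * b) ≤ a ^ 2 + b ^ 2 := by
  rcases le_total a b with h | h
  · obtain ⟨k, rfl⟩ := Nat.exists_eq_add_of_le h
    ring_nf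
    nlinarith
  · obtain ⟨k, rfl⟩ := Nat.exists_eq_add_of_le h
    ring_nf
    nlinarith

lemma card_T1 {V E ι : Type} [Fintype V] [Fintype E] (K : Multigraph V E)
    (B : ι → Set V) (bagf : V → ι) (w : ℕ)
    (hbagf : ∀ v, v ∈ B (bagf v)) (hbagu : ∀ v x, v ∈ B x → x = bagf v)
    (hwidth : ∀ x, (B x).ncard ≤ w) :
    Nat.card {p : (V × E) × (V × E) // p.1.1 ≠ p.2.1 ∧ bagf p.1.1 = bagf p.2.1 ∧
        p.1.1 ∈ K.ends p.1.2 ∧ p.2.1 ∈ K.ends p.2.2} ≤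
      (w - 1) * ∑ᶠ v ∈ {v : V | ∀ x : ι, v ∈ B x → (B x).ncard ≠ 1}, (K.deg v) ^ 2 := by
  classical
  set c2 : V × V → Prop := fun uv => uv.1 ≠ uv.2 ∧ bagf uv.1 = bagf uv.2 with hc2
  set A : Finset (V × V) := Finset.univ.filter c2 with hA
  have hmemA : ∀ uv : V × V, uv ∈ A ↔ c2 uv := by
    intro uv; simp [hA]
  -- step 1
  have hinj : Function.Injective
      (fun p : {p : (V × E) × (V × E) // p.1.1 ≠ p.2.1 ∧ bagf p.1.1 = bagf p.2.1 ∧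
          p.1.1 ∈ K.ends p.1.2 ∧ p.2.1 ∈ K.ends p.2.2} =>
        (⟨⟨(p.1.1.1, p.1.2.1), ⟨p.2.1, p.2.2.1⟩⟩,
          (⟨p.1.1.2, p.2.2.2.1⟩, ⟨p.1.2.2, p.2.2.2.2⟩)⟩ :
          Σ uv : {uv : V × V // c2 uv},
            ({e : E // uv.val.1 ∈ K.ends e} × {e : E // uv.val.2 ∈ K.ends e}))) := by
    rintro ⟨⟨⟨u, e⟩, v, f⟩, h⟩ ⟨⟨⟨u', e'⟩, v', f'⟩, h'⟩ hf
    obtain ⟨h1, h2⟩ := Sigma.mk.inj_iff.1 hf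
    rw [Subtype.mk.injEq, Prod.mk.injEq] at h1
    obtain ⟨rfl, rfl⟩ := h1
    rw [heq_iff_eq, Prod.ext_iff, Subtype.ext_iff, Subtype.ext_iff] at h2
    simp only [Subtype.mk.injEq, Prod.mk.injEq]
    exact ⟨⟨trivial, h2.1⟩, trivial, h2.2⟩
  refine le_trans (Nat.card_le_card_of_injective _ hinj) ?_
  have hcard1 : Nat.card (Σ uv : {uv : V × V // c2 uv},
      ({e : E // uv.val.1 ∈ K.ends e} × {e : E // uv.val.2 ∈ K.ends e})) =
      ∑ uv ∈ A, K.deg uv.1 * K.deg uv.2 := by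
    rw [Nat.card_eq_fintype_card, Fintype.card_sigma]
    rw [Finset.sum_subtype A hmemA
      (fun uv => K.deg uv.1 * K.deg uv.2)]
    apply Finset.sum_congr rfl
    intro uv _
    rw [Fintype.card_prod]
    unfold Multigraph.deg
    rw [Nat.card_eq_fintype_card, Nat.card_eq_fintype_card]
  rw [hcard1]
  -- step 2 : Σ_A d1 d2 ≤ Σ_A d1²
  have hswap : ∀ uv : V × V, uv ∈ A → uv.swap ∈ A := by
    intro uv huv
    rw [hmemA] at huv ⊢
    exact ⟨Ne.symm huv.1, huv.2.symm⟩
  have hsum_swap : ∑ uv ∈ A, (K.deg uv.2) ^ 2 = ∑ uv ∈ A, (K.deg uv.1) ^ 2 := by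
    apply Finset.sum_nbij' Prod.swap Prod.swap hswap hswap
    · intro a _; simp
    · intro a _; simp
    · intro a _; simp
  have step2 : ∑ uv ∈ A, K.deg uv.1 * K.deg uv.2 ≤ ∑ uv ∈ A, (K.deg uv.1) ^ 2 := by
    have h2 : 2 * ∑ uv ∈ A, K.deg uv.1 * K.deg uv.2 ≤ 2 * ∑ uv ∈ A, (K.deg uv.1) ^ 2 := by
      calc 2 * ∑ uv ∈ A, K.deg uv.1 * K.deg uv.2
          = ∑ uv ∈ A, 2 * (K.deg uv.1 * K.deg uv.2) := by rw [Finset.mul_sum]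
        _ ≤ ∑ uv ∈ A, ((K.deg uv.1) ^ 2 + (K.deg uv.2) ^ 2) :=
            Finset.sum_le_sum fun uv _ => two_mul_le_sq_add_sq _ _
        _ = ∑ uv ∈ A, (K.deg uv.1) ^ 2 + ∑ uv ∈ A, (K.deg uv.2) ^ 2 := Finset.sum_add_distrib
        _ = 2 * ∑ uv ∈ A, (K.deg uv.1) ^ 2 := by rw [hsum_swap]; ring
    exact Nat.le_of_mul_le_mul_left h2 (by norm_num)
  refine le_trans step2 ?_
  -- step 3
  set Xset : Set V := {v : V | ∀ x : ι, v ∈ B x → (B x).ncard ≠ 1} with hXset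
  set Xfin : Finset V := Finset.univ.filter (· ∈ Xset) with hXfin
  set cnt : V → ℕ := fun u => (Finset.univ.filter (fun v => c2 (u, v))).card with hcnt
  have hsum3 : ∑ uv ∈ A, (K.deg uv.1) ^ 2 = ∑ u : V, cnt u * (K.deg u) ^ 2 := by
    rw [hA, Finset.sum_filter, Fintype.sum_prod_type]
    apply Finset.sum_congr rfl
    intro u _
    have hstep : ∀ v : V, (if c2 (u, v) then K.deg (u, v).1 ^ 2 else 0) =
        (if c2 (u, v) then K.deg u ^ 2 else 0) := fun v => rfl
    rw [Finset.sum_congr rfl (fun v _ => hstep v), ← Finset.sum_filter,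
      Finset.sum_const, smul_eq_mul]
  rw [hsum3]
  have hcnt_le : ∀ u, cnt u ≤ w - 1 := by
    intro u
    have hsub : Finset.univ.filter (fun v => c2 (u, v)) ⊆ ((B (bagf u)).toFinset).erase u := by
      intro v hv
      rw [Finset.mem_filter] at hv
      obtain ⟨-, hne, hbag⟩ := hv
      rw [Finset.mem_erase]
      refine ⟨Ne.symm hne, ?_⟩
      rw [Set.mem_toFinset, hbag]
      exact hbagf v
    refine le_trans (Finset.card_le_card hsub) ?_
    rw [Finset.card_erase_of_mem (by rw [Set.mem_toFinset]; exact hbagf u)]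
    have := hwidth (bagf u)
    rw [Set.ncard_eq_toFinset_card'] at this
    exact Nat.sub_le_sub_right this 1
  have hcnt0 : ∀ u, u ∉ Xset → cnt u = 0 := by
    intro u hu
    rw [hXset, Set.mem_setOf_eq] at hu
    push_neg at hu
    obtain ⟨x, hux, hx1⟩ := hu
    have hxu : x = bagf u := hbagu u x hux
    subst hxu
    obtain ⟨a, ha⟩ := Set.ncard_eq_one.1 hx1
    have hua : u = a := by
      have := hux; rw [ha] at this; exact this
    rw [hcnt, Finset.card_eq_zero, Finset.filter_eq_empty_iff]
    intro v _
    rintro ⟨hne, hbag⟩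
    apply hne
    have hv : v ∈ B (bagf u) := by rw [hbag]; exact hbagf v
    rw [ha] at hv
    rw [hua, hv]
  have hXrw : ∑ᶠ v ∈ Xset, (K.deg v) ^ 2 = ∑ v ∈ Xfin, (K.deg v) ^ 2 := by
    have : Xset = ↑Xfin := by
      ext v; simp [hXfin]
    rw [this, finsum_mem_coe_finset]
  rw [hXrw]
  calc ∑ u : V, cnt u * (K.deg u) ^ 2
      = ∑ u ∈ Xfin, cnt u * (K.deg u) ^ 2 := by
        symm
        apply Finset.sum_subset (Finset.subset_univ Xfin)
        intro u _ hu
        have : u ∉ Xset := by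
          intro hmem
          apply hu
          rw [hXfin, Finset.mem_filter]
          exact ⟨Finset.mem_univ u, hmem⟩
        rw [hcnt0 u this, zero_mul]
    _ ≤ ∑ u ∈ Xfin, (w - 1) * (K.deg u) ^ 2 :=
        Finset.sum_le_sum fun u _ => Nat.mul_le_mul_right _ (hcnt_le u)
    _ = (w - 1) * ∑ u ∈ Xfin, (K.deg u) ^ 2 := by rw [Finset.mul_sum]


end RcrAux

/-- If a finite multigraph `K` has an `H`-partition of width `w` (`H` a
finite simple graph), and `X` is the set of vertices of `K` not in solitary bags, then
`rcr(K) ≤ rcr(H) · w² · Δ(K)² + (w − 1) · Σ_{v ∈ X} deg_K(v)²`. -/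
theorem rcr_le_of_HPartition {V E ι : Type} [Fintype V] [Fintype E] [Fintype ι]
    (K : Multigraph V E) (H : SimpleGraph ι) (B : ι → Set V) (w : ℕ)
    (hpart : IsHPartition K H B) (hwidth : ∀ x : ι, (B x).ncard ≤ w) :
    K.rcr ≤ H.rcr * w ^ 2 * K.maxDeg ^ 2 +
      (w - 1) * ∑ᶠ v ∈ {v : V | ∀ x : ι, v ∈ B x → (B x).ncard ≠ 1}, (K.deg v) ^ 2 := by
  classical
  obtain ⟨hne, huniq, hadj⟩ := hpart
  choose bagf hbagf hbagu using huniq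
  -- an optimal drawing of H
  have hH : ∃ p : ι → ℝ × ℝ, H.toMulti.IsRectDrawing p ∧
      H.toMulti.crossCount p = SimpleGraph.rcr H := by
    have hne' : {n | ∃ p, H.toMulti.IsRectDrawing p ∧ H.toMulti.crossCount p = n}.Nonempty := by
      obtain ⟨p, hinj, hgen, -⟩ := RcrAux.genpos_place (fun _ : ι => ((0 : ℝ), (0 : ℝ))) one_pos
      exact ⟨H.toMulti.crossCount p, p, ⟨hinj, hgen⟩, rfl⟩
    exact Nat.sInf_mem hne'
  obtain ⟨p₀, ⟨hp₀inj, hp₀gen⟩, hp₀count⟩ := hH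
  by_cases hEem : IsEmpty E
  · obtain ⟨p, hinj, hgen, -⟩ := RcrAux.genpos_place (fun _ : V => ((0 : ℝ), (0 : ℝ))) one_pos
    have hc : K.crossCount p = 0 := by
      have hie : IsEmpty {s : Sym2 E // ∃ e f : E, s = s(e, f) ∧ K.CrossingPair p e f} := by
        constructor; rintro ⟨s, e, f, -, -⟩; exact hEem.false e
      exact Nat.card_of_isEmpty
    have hle : K.rcr ≤ 0 := Nat.sInf_le ⟨p, ⟨hinj, hgen⟩, hc⟩
    exact le_trans hle (Nat.zero_le _)
  rw [not_isEmpty_iff] at hEem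
  set pb : V → ℝ × ℝ := fun v => p₀ (bagf v) with hpb
  set P : E → Set (ℝ × ℝ) := fun e => segOf ((K.ends e).map pb) with hP
  -- choice of ε
  have hdelta : ∀ ef : E × E, ∃ δ : ℝ, 0 < δ ∧
      (P ef.1 ∩ P ef.2 = ∅ → ∀ p ∈ P ef.1, ∀ r ∈ P ef.2, δ ≤ dist p r) := by
    intro ef
    by_cases hd : P ef.1 ∩ P ef.2 = ∅
    · obtain ⟨δ, hδ, hδle⟩ := RcrAux.pos_dist_of_disjoint (RcrAux.isCompact_segOf _)
        (RcrAux.isCompact_segOf _) (RcrAux.segOf_nonempty _) (RcrAux.segOf_nonempty _) hd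
      exact ⟨δ, hδ, fun _ => hδle⟩
    · exact ⟨1, one_pos, fun h => absurd h hd⟩
  choose df hdf0 hdfle using hdelta
  haveI : Nonempty (E × E) := ⟨(Classical.arbitrary E, Classical.arbitrary E)⟩
  set m : ℝ := Finset.univ.inf' Finset.univ_nonempty df with hm
  have hm0 : 0 < m := (Finset.lt_inf'_iff _).2 fun i _ => hdf0 i
  have hε : 0 < m / 3 := by positivity
  have hsep : ∀ e f : E, P e ∩ P f = ∅ → ∀ p ∈ P e, ∀ r ∈ P f, 2 * (m / 3) < dist p r := by
    intro e f hd p hp r hr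
    have h1 : m ≤ df (e, f) := Finset.inf'_le _ (Finset.mem_univ _)
    have h2 := hdfle (e, f) hd p hp r hr
    linarith
  -- the drawing of K
  obtain ⟨q, hqinj, hqgen, hqd⟩ := RcrAux.genpos_place pb hε
  have hqd' : ∀ v, dist (q v) (pb v) ≤ m / 3 := fun v => (hqd v).le
  -- crossing pairs meet at the level of H-segments
  have hPmeet : ∀ e f : E, K.CrossingPair q e f → (P e ∩ P f).Nonempty := by
    rintro e f ⟨hnc, x, hx1, hx2⟩
    obtain ⟨u1, u2, he⟩ := RcrAux.sym2_exists (K.ends e)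
    obtain ⟨v1, v2, hf⟩ := RcrAux.sym2_exists (K.ends f)
    have hx1' : x ∈ segment ℝ (q u1) (q u2) := by
      rw [he] at hx1; simpa [Sym2.map_pair_eq] using hx1
    have hx2' : x ∈ segment ℝ (q v1) (q v2) := by
      rw [hf] at hx2; simpa [Sym2.map_pair_eq] using hx2
    obtain ⟨r, hr, hrd⟩ := RcrAux.segment_approx (hqd' u1) (hqd' u2) hx1'
    obtain ⟨r', hr', hrd'⟩ := RcrAux.segment_approx (hqd' v1) (hqd' v2) hx2'
    have hrP : r ∈ P e := by
      rw [hP]; simp only; rw [he, Sym2.map_pair_eq, RcrAux.segOf_mk]; exact hr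
    have hrP' : r' ∈ P f := by
      rw [hP]; simp only; rw [hf, Sym2.map_pair_eq, RcrAux.segOf_mk]; exact hr'
    by_contra hcon
    rw [Set.not_nonempty_iff_eq_empty] at hcon
    have hgt := hsep e f hcon r hrP r' hrP'
    have htri : dist r r' ≤ dist x r + dist x r' := by
      calc dist r r' ≤ dist r x + dist x r' := dist_triangle r x r'
        _ = dist x r + dist x r' := by rw [dist_comm r x]
    linarith
  -- type II crossing pairs give H crossing pairs
  have hII : ∀ e f : E, K.CrossingPair q e f →
      (¬ ∃ x : ι, x ∈ (K.ends e).map bagf ∧ x ∈ (K.ends f).map bagf) →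
      ∃ g h : ↥H.edgeSet, g.val = (K.ends e).map bagf ∧ h.val = (K.ends f).map bagf ∧
        H.toMulti.CrossingPair p₀ g h := by
    intro e f hcp hnsh
    obtain ⟨z0, hz0e, hz0f⟩ := hPmeet e f hcp
    obtain ⟨u1, u2, he⟩ := RcrAux.sym2_exists (K.ends e)
    obtain ⟨v1, v2, hf⟩ := RcrAux.sym2_exists (K.ends f)
    have hmeme : ∀ u, u ∈ K.ends e → bagf u ∈ (K.ends e).map bagf :=
      fun u hu => Sym2.mem_map.2 ⟨u, hu, rfl⟩
    have hmemf : ∀ v, v ∈ K.ends f → bagf v ∈ (K.ends f).map bagf :=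
      fun v hv => Sym2.mem_map.2 ⟨v, hv, rfl⟩
    have hu1 : u1 ∈ K.ends e := by rw [he]; exact Sym2.mem_mk_left _ _
    have hu2 : u2 ∈ K.ends e := by rw [he]; exact Sym2.mem_mk_right _ _
    have hv1 : v1 ∈ K.ends f := by rw [hf]; exact Sym2.mem_mk_left _ _
    have hv2 : v2 ∈ K.ends f := by rw [hf]; exact Sym2.mem_mk_right _ _
    -- bags of e and f are disjoint
    have hdisj : ∀ u, u ∈ K.ends e → ∀ v, v ∈ K.ends f → bagf u ≠ bagf v := by
      intro u hu v hv hb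
      exact hnsh ⟨bagf u, hmeme u hu, hb ▸ hmemf v hv⟩
    have hz0e' : z0 ∈ segment ℝ (pb u1) (pb u2) := by
      rw [hP] at hz0e; simp only at hz0e
      rw [he, Sym2.map_pair_eq, RcrAux.segOf_mk] at hz0e; exact hz0e
    have hz0f' : z0 ∈ segment ℝ (pb v1) (pb v2) := by
      rw [hP] at hz0f; simp only at hz0f
      rw [hf, Sym2.map_pair_eq, RcrAux.segOf_mk] at hz0f; exact hz0f
    -- nondegeneracy of the bag pairs
    have hrange : ∀ v : V, pb v ∈ Set.range p₀ := fun v => ⟨bagf v, rfl⟩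
    have hbe : bagf u1 ≠ bagf u2 := by
      intro hbb
      have hpe : pb u1 = pb u2 := by rw [hpb]; simp only; rw [hbb]
      rw [← hpe, segment_same, Set.mem_singleton_iff] at hz0e'
      subst hz0e'
      rcases eq_or_ne (bagf v1) (bagf v2) with hbf | hbf
      · have hpf : pb v1 = pb v2 := by rw [hpb]; simp only; rw [hbf]
        rw [← hpf, segment_same, Set.mem_singleton_iff] at hz0f'
        exact hdisj u1 hu1 v1 hv1 (hp₀inj hz0f')
      · have hne1 : pb u1 ≠ pb v1 := fun hh => hdisj u1 hu1 v1 hv1 (hp₀inj hh)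
        have hne2 : pb u1 ≠ pb v2 := fun hh => hdisj u1 hu1 v2 hv2 (hp₀inj hh)
        have hne3 : pb v1 ≠ pb v2 := fun hh => hbf (hp₀inj hh)
        have hcol := RcrAux.collinear_of_mem_segment hz0f'
        exact hp₀gen.1 (pb u1) (hrange u1) (pb v1) (hrange v1) (pb v2) (hrange v2)
          hne1 hne2 hne3 hcol
    have hbf2 : bagf v1 ≠ bagf v2 := by
      intro hbb
      have hpf : pb v1 = pb v2 := by rw [hpb]; simp only; rw [hbb]
      rw [← hpf, segment_same, Set.mem_singleton_iff] at hz0f'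
      subst hz0f'
      have hne1 : pb v1 ≠ pb u1 := fun hh => hdisj u1 hu1 v1 hv1 (hp₀inj hh).symm
      have hne2 : pb v1 ≠ pb u2 := fun hh => hdisj u2 hu2 v1 hv1 (hp₀inj hh).symm
      have hne3 : pb u1 ≠ pb u2 := fun hh => hbe (hp₀inj hh)
      have hcol := RcrAux.collinear_of_mem_segment hz0e'
      exact hp₀gen.1 (pb v1) (hrange v1) (pb u1) (hrange u1) (pb u2) (hrange u2)
        hne1 hne2 hne3 hcol
    -- the H edges
    have hadj1 : H.Adj (bagf u1) (bagf u2) :=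
      hadj e u1 hu1 u2 hu2 (bagf u1) (bagf u2) (hbagf u1) (hbagf u2) hbe
    have hadj2 : H.Adj (bagf v1) (bagf v2) :=
      hadj f v1 hv1 v2 hv2 (bagf v1) (bagf v2) (hbagf v1) (hbagf v2) hbf2
    refine ⟨⟨s(bagf u1, bagf u2), H.mem_edgeSet.2 hadj1⟩,
      ⟨s(bagf v1, bagf v2), H.mem_edgeSet.2 hadj2⟩, ?_, ?_, ?_, ?_⟩
    · rw [he, Sym2.map_pair_eq]
    · rw [hf, Sym2.map_pair_eq]
    · -- no common endpoint
      intro x hx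
      obtain ⟨hxe, hxf⟩ := hx
      simp only [SimpleGraph.toMulti] at hxe hxf
      rcases Sym2.mem_iff.1 hxe with rfl | rfl <;> rcases Sym2.mem_iff.1 hxf with h | h
      · exact hdisj u1 hu1 v1 hv1 h
      · exact hdisj u1 hu1 v2 hv2 h
      · exact hdisj u2 hu2 v1 hv1 h
      · exact hdisj u2 hu2 v2 hv2 h
    · -- segments meet
      refine ⟨z0, ?_, ?_⟩
      · simp only [SimpleGraph.toMulti]
        rw [Sym2.map_pair_eq, RcrAux.segOf_mk]
        exact hz0e'
      · simp only [SimpleGraph.toMulti]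
        rw [Sym2.map_pair_eq, RcrAux.segOf_mk]
        exact hz0f'
  -- the counting
  have hord : ∀ c : {s : Sym2 ↥H.edgeSet // ∃ g h, s = s(g, h) ∧
      H.toMulti.CrossingPair p₀ g h}, ∃ gh : Sym2 ι × Sym2 ι,
      ∀ g h : ↥H.edgeSet, c.val = s(g, h) → gh = (g.val, h.val) ∨ gh = (h.val, g.val) := by
    intro c
    obtain ⟨g0, h0, hgh, -⟩ := c.2
    refine ⟨(g0.val, h0.val), ?_⟩
    intro g h hc
    rw [hgh] at hc
    rcases Sym2.eq_iff.1 hc with ⟨rfl, rfl⟩ | ⟨rfl, rfl⟩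
    · left; rfl
    · right; rfl
  choose ordf hordf using hord
  -- injection from crossing pairs
  have hF : ∀ s : {s : Sym2 E // ∃ e f : E, s = s(e, f) ∧ K.CrossingPair q e f},
      ∃ y : {p : (V × E) × (V × E) // p.1.1 ≠ p.2.1 ∧ bagf p.1.1 = bagf p.2.1 ∧
          p.1.1 ∈ K.ends p.1.2 ∧ p.2.1 ∈ K.ends p.2.2} ⊕
        {x : {s : Sym2 ↥H.edgeSet // ∃ g h, s = s(g, h) ∧ H.toMulti.CrossingPair p₀ g h}
            × E × E // (K.ends x.2.1).map bagf = (ordf x.1).1 ∧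
          (K.ends x.2.2).map bagf = (ordf x.1).2},
      (∀ p hp, y = Sum.inl ⟨p, hp⟩ → s.val = s(p.1.2, p.2.2)) ∧
      (∀ x hx, y = Sum.inr ⟨x, hx⟩ → s.val = s(x.2.1, x.2.2)) := by
    rintro ⟨sv, hsv⟩
    obtain ⟨e, f, hef, hcp⟩ := hsv
    by_cases hsh : ∃ x : ι, x ∈ (K.ends e).map bagf ∧ x ∈ (K.ends f).map bagf
    · obtain ⟨x, hx1, hx2⟩ := hsh
      obtain ⟨u, hu, hbu⟩ := Sym2.mem_map.1 hx1
      obtain ⟨v, hv, hbv⟩ := Sym2.mem_map.1 hx2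
      have huv : u ≠ v := by
        rintro rfl
        exact hcp.1 u ⟨hu, hv⟩
      refine ⟨Sum.inl ⟨((u, e), (v, f)), ⟨huv, by rw [hbu, hbv], hu, hv⟩⟩, ?_, ?_⟩
      · intro p hp hy
        have : (((u, e), (v, f)) : (V × E) × (V × E)) = p := by
          have := Sum.inl.inj hy
          exact congrArg Subtype.val this
        rw [← this]
        exact hef
      · intro x hx hy
        exact absurd hy (by simp)
    · obtain ⟨g, h, hg, hh, hcpH⟩ := hII e f hcp hsh
      rcases hordf ⟨s(g, h), ⟨g, h, rfl, hcpH⟩⟩ g h rfl with hord1 | hord1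
      · refine ⟨Sum.inr ⟨(⟨s(g, h), ⟨g, h, rfl, hcpH⟩⟩, e, f),
          ⟨by rw [hord1]; exact hg.symm, by rw [hord1]; exact hh.symm⟩⟩, ?_, ?_⟩
        · intro p hp hy
          exact absurd hy (by simp)
        · intro x hx hy
          have : ((⟨s(g, h), ⟨g, h, rfl, hcpH⟩⟩, e, f) :
              {s : Sym2 ↥H.edgeSet // ∃ g h, s = s(g, h) ∧ H.toMulti.CrossingPair p₀ g h}
                × E × E) = x := by
            have := Sum.inr.inj hy
            exact congrArg Subtype.val this
          rw [← this]
          exact hef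
      · refine ⟨Sum.inr ⟨(⟨s(g, h), ⟨g, h, rfl, hcpH⟩⟩, f, e),
          ⟨by rw [hord1]; exact hh.symm, by rw [hord1]; exact hg.symm⟩⟩, ?_, ?_⟩
        · intro p hp hy
          exact absurd hy (by simp)
        · intro x hx hy
          have : ((⟨s(g, h), ⟨g, h, rfl, hcpH⟩⟩, f, e) :
              {s : Sym2 ↥H.edgeSet // ∃ g h, s = s(g, h) ∧ H.toMulti.CrossingPair p₀ g h}
                × E × E) = x := by
            have := Sum.inr.inj hy
            exact congrArg Subtype.val this
          rw [← this]
          exact hef.trans Sym2.eq_swap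
  choose F hF1 hF2 using hF
  have hFinj : Function.Injective F := by
    intro s s' hFs
    apply Subtype.ext
    rcases hy : F s with y1 | y2
    · have h1 := hF1 s y1.val y1.2 (by rw [hy])
      have h2 := hF1 s' y1.val y1.2 (by rw [← hFs, hy])
      rw [h1, h2]
    · have h1 := hF2 s y2.val y2.2 (by rw [hy])
      have h2 := hF2 s' y2.val y2.2 (by rw [← hFs, hy])
      rw [h1, h2]
  -- assemble the bounds
  have hcount : K.crossCount q ≤
      (w - 1) * ∑ᶠ v ∈ {v : V | ∀ x : ι, v ∈ B x → (B x).ncard ≠ 1}, (K.deg v) ^ 2 +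
      SimpleGraph.rcr H * (w * K.maxDeg * (w * K.maxDeg)) := by
    have hstep : K.crossCount q ≤
        Nat.card {p : (V × E) × (V × E) // p.1.1 ≠ p.2.1 ∧ bagf p.1.1 = bagf p.2.1 ∧
          p.1.1 ∈ K.ends p.1.2 ∧ p.2.1 ∈ K.ends p.2.2} +
        Nat.card {x : {s : Sym2 ↥H.edgeSet // ∃ g h, s = s(g, h) ∧
            H.toMulti.CrossingPair p₀ g h} × E × E //
          (K.ends x.2.1).map bagf = (ordf x.1).1 ∧
          (K.ends x.2.2).map bagf = (ordf x.1).2} := by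
      rw [← Nat.card_sum]
      exact Nat.card_le_card_of_injective F hFinj
    refine le_trans hstep (Nat.add_le_add ?_ ?_)
    · exact RcrAux.card_T1 K B bagf w hbagf hbagu hwidth
    · haveI : Fintype {s : Sym2 ↥H.edgeSet // ∃ g h, s = s(g, h) ∧
          H.toMulti.CrossingPair p₀ g h} := Fintype.ofFinite _
      have hT2 := RcrAux.card_T2 (γ := {s : Sym2 ↥H.edgeSet // ∃ g h, s = s(g, h) ∧
          H.toMulti.CrossingPair p₀ g h}) (fun e => (K.ends e).map bagf) ordf
        (w * K.maxDeg) (fun g => RcrAux.card_fiber_le K B bagf w hbagf hwidth g)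
      refine le_trans hT2 ?_
      have hHC : Nat.card {s : Sym2 ↥H.edgeSet // ∃ g h, s = s(g, h) ∧
          H.toMulti.CrossingPair p₀ g h} = SimpleGraph.rcr H := hp₀count
      rw [hHC]
  have hrcr : K.rcr ≤ K.crossCount q := Nat.sInf_le ⟨q, ⟨hqinj, hqgen⟩, rfl⟩
  refine le_trans hrcr (le_trans hcount ?_)
  have : SimpleGraph.rcr H * (w * K.maxDeg * (w * K.maxDeg)) =
      SimpleGraph.rcr H * w ^ 2 * K.maxDeg ^ 2 := by ring
  rw [this]
  omega
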